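/- Let n ≥ k and t be natural numbers. Consider two random experiments producing a transcript ((x₁, f(x₁)), …, (x_t, f(x_t))), where x₁, …, x_t are independent uniformly random elements of Fin n → Bool in both experiments: in experiment H, f is drawn uniformly from all functions (Fin n → Bool) → Bool that depend only on the first k coordinates; in experiment G, f is drawn uniformly from all functions (Fin n → Bool) → Bool. Then the total variation distance between the distributions of the transcript in the two experiments is at most t(t−1)/2^{k+1}. -/

import Mathlib

/-- The probability of observing the transcript `ω = ((x₁, f x₁), …, (x_t, f x_t))`
when `f` is drawn uniformly from the finite family `F` and `x₁, …, x_t` are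
independent uniformly random points of `Fin n → Bool`. -/
noncomputable def transcriptProb {n t : ℕ} (F : Finset ((Fin n → Bool) → Bool))
    (ω : Fin t → (Fin n → Bool) × Bool) : ℝ :=
  ((F.filter (fun f => ∀ j : Fin t, f (ω j).1 = (ω j).2)).card : ℝ)
    / ((F.card : ℝ) * ((2 : ℝ) ^ n) ^ t)

/-!
The two experiments can only be told apart when two sample points agree on their first `k`
coordinates. If the restrictions of `x₁, …, x_t` to the first `k` coordinates are pairwise
distinct, the labels `f xⱼ` are independent uniform bits both for a random junta and for a
random function, so the two transcript distributions agree on those points; on the remaining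
points their total variation is at most `1`. By a union bound over the `t(t-1)/2` pairs, each
colliding with probability `2^{-k}`, the remaining points have probability at most
`t(t-1)/2^{k+1}`.
-/

open Finset Function

section Counting

variable {α β Y ι : Type*} [Fintype α] [Fintype β] [Fintype Y] [Fintype ι]

theorem card_filter_comp_eq_mul_card [DecidableEq ι] [DecidableEq α] [DecidableEq Y]
    {e : ι → α} (he : Injective e) (z : ι → Y) :
    #{f : α → Y | f ∘ e = z} * Fintype.card (ι → Y) = Fintype.card (α → Y) := by
  let split : (α → Y) ≃ {f : α → Y // f ∘ e = z} × (ι → Y) :=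
    { toFun f := (⟨extend e z f, funext (he.extend_apply z f)⟩, f ∘ e)
      invFun gc := extend e gc.2 gc.1.1
      left_inv f := by
        funext x
        by_cases hx : ∃ i, e i = x
        · obtain ⟨i, rfl⟩ := hx
          simp [he.extend_apply]
        · simp [extend_apply' _ _ _ hx]
      right_inv := by
        rintro ⟨⟨g, rfl⟩, c⟩
        refine Prod.ext (Subtype.ext (funext fun x => ?_)) (funext (he.extend_apply c g))
        by_cases hx : ∃ i, e i = x
        · obtain ⟨i, rfl⟩ := hx
          simp [he.extend_apply]
        · simp [extend_apply' _ _ _ hx] }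
  rw [Fintype.card_congr split, Fintype.card_prod, Fintype.card_subtype]

theorem card_filter_apply_eq_apply_mul_card [DecidableEq ι] [DecidableEq β] (π : α → β)
    (hπ : ∀ b, #{a | π a = b} * Fintype.card β = Fintype.card α) {p q : ι} (hpq : p ≠ q) :
    #{xs : ι → α | π (xs p) = π (xs q)} * Fintype.card β = Fintype.card α ^ Fintype.card ι := by
  let p' : {j // j ≠ q} := ⟨p, hpq⟩
  have hsplit : #{xs : ι → α | π (xs p) = π (xs q)}
      = #{ar : α × ({j // j ≠ q} → α) | π ar.1 = π (ar.2 p')} :=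
    card_equiv (Equiv.funSplitAt q α) (by simp [p', eq_comm])
  have hq : 0 < Fintype.card ι := Fintype.card_pos_iff.2 ⟨q⟩
  calc #{xs : ι → α | π (xs p) = π (xs q)} * Fintype.card β
      = ∑ r : {j // j ≠ q} → α, #{a | π a = π (r p')} * Fintype.card β := by
        rw [hsplit, card_filter, Fintype.sum_prod_type_right, sum_mul]
        simp only [card_filter]
    _ = Fintype.card α ^ Fintype.card ι := by
        simp only [hπ, sum_const, card_univ, Fintype.card_fun, smul_eq_mul,
          Fintype.card_subtype_compl, Fintype.card_unique]
        rw [← pow_succ, Nat.sub_add_cancel hq]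

theorem card_filter_not_injective_comp_mul_le [DecidableEq ι] [LinearOrder ι] [DecidableEq β]
    (π : α → β) (hπ : ∀ b, #{a | π a = b} * Fintype.card β = Fintype.card α) :
    #{xs : ι → α | ¬Injective (π ∘ xs)} * Fintype.card β
      ≤ (Fintype.card ι).choose 2 * Fintype.card α ^ Fintype.card ι := by
  classical
  have hcover : ({xs : ι → α | ¬Injective (π ∘ xs)} : Finset _)
      ⊆ ({pq : ι × ι | pq.1 < pq.2} : Finset _).biUnion
          fun pq => {xs : ι → α | π (xs pq.1) = π (xs pq.2)} := by
    intro xs hxs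
    simp only [Injective, comp_apply, not_forall, mem_filter, mem_univ, true_and] at hxs
    obtain ⟨p, q, hpq, hne⟩ := hxs
    simp only [mem_biUnion, mem_filter, mem_univ, true_and, Prod.exists]
    rcases lt_or_gt_of_ne hne with h | h
    · exact ⟨p, q, h, hpq⟩
    · exact ⟨q, p, h, hpq.symm⟩
  calc #{xs : ι → α | ¬Injective (π ∘ xs)} * Fintype.card β
      ≤ (∑ pq ∈ {pq : ι × ι | pq.1 < pq.2}, #{xs : ι → α | π (xs pq.1) = π (xs pq.2)})
          * Fintype.card β :=
        Nat.mul_le_mul_right _ ((card_le_card hcover).trans card_biUnion_le)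
    _ = ∑ pq ∈ {pq : ι × ι | pq.1 < pq.2}, Fintype.card α ^ Fintype.card ι := by
        rw [sum_mul]
        exact sum_congr rfl fun pq hpq =>
          card_filter_apply_eq_apply_mul_card π hπ (mem_filter.1 hpq).2.ne
    _ = (Fintype.card ι).choose 2 * Fintype.card α ^ Fintype.card ι := by
        rw [sum_const, smul_eq_mul, Fintype.card_product_filter_lt]

theorem card_filter_image_comp_mul_card [DecidableEq ι] [DecidableEq α] [DecidableEq β]
    [DecidableEq Y] {π : α → β} (hπ : Surjective π) {xs : ι → α} (hxs : Injective (π ∘ xs))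
    (bs : ι → Y) :
    #{f ∈ univ.image (· ∘ π) | f ∘ xs = bs} * Fintype.card (ι → Y)
      = #(univ.image fun g : β → Y => g ∘ π) := by
  rw [filter_image, card_image_of_injective _ hπ.injective_comp_right,
    card_image_of_injective _ hπ.injective_comp_right, card_univ]
  exact card_filter_comp_eq_mul_card hxs bs

end Counting

theorem Fintype.sum_arrow_prod {ι α Y M : Type*} [Fintype ι] [DecidableEq ι] [Fintype α]
    [Fintype Y] [AddCommMonoid M] (G : (ι → α × Y) → M) :
    ∑ ω, G ω = ∑ xs : ι → α, ∑ bs : ι → Y, G fun j => (xs j, bs j) := by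
  rw [← Fintype.sum_prod_type']
  exact Fintype.sum_equiv (Equiv.arrowProdEquivProdArrow _ _ _) _ _ fun _ => rfl

theorem comp_castLE_eq_comp_castLE_iff {α : Type*} {k n : ℕ} (hkn : k ≤ n) {x y : Fin n → α} :
    x ∘ Fin.castLE hkn = y ∘ Fin.castLE hkn ↔ ∀ i : Fin n, (i : ℕ) < k → x i = y i :=
  ⟨fun h i hi => congrFun h ⟨i, hi⟩, fun h => funext fun i => h _ i.2⟩

section Transcript

variable {n t : ℕ}

theorem transcriptProb_nonneg (F : Finset ((Fin n → Bool) → Bool))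
    (ω : Fin t → (Fin n → Bool) × Bool) : 0 ≤ transcriptProb F ω := by
  unfold transcriptProb
  positivity

theorem sum_transcriptProb {F : Finset ((Fin n → Bool) → Bool)} (hF : F.Nonempty)
    (xs : Fin t → Fin n → Bool) :
    ∑ bs : Fin t → Bool, transcriptProb F (fun j => (xs j, bs j)) = 1 / ((2 : ℝ) ^ n) ^ t := by
  have hlabels : ∑ bs : Fin t → Bool, #{f ∈ F | ∀ j, f (xs j) = bs j} = #F := by
    simp only [← funext_iff]
    exact (card_eq_sum_card_fiberwise fun f _ => mem_univ (fun j => f (xs j))).symm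
  have hF' : (#F : ℝ) ≠ 0 := by exact_mod_cast hF.card_pos.ne'
  simp only [transcriptProb, ← sum_div]
  rw [← Nat.cast_sum, hlabels]
  field_simp

theorem transcriptProb_image_comp {β : Type*} [Fintype β] [DecidableEq β]
    {π : (Fin n → Bool) → β} (hπ : Surjective π) {xs : Fin t → Fin n → Bool}
    (hxs : Injective (π ∘ xs)) (bs : Fin t → Bool) :
    transcriptProb (univ.image (· ∘ π)) (fun j => (xs j, bs j))
      = 1 / (2 ^ t * ((2 : ℝ) ^ n) ^ t) := by
  have hcount := card_filter_image_comp_mul_card (Y := Bool) hπ hxs bs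
  simp only [funext_iff, comp_apply, Fintype.card_fun, Fintype.card_bool, Fintype.card_fin]
    at hcount
  rw [transcriptProb, div_eq_div_iff (by positivity) (by positivity), ← hcount]
  push_cast
  ring

theorem sum_abs_sub_transcriptProb_le {F G : Finset ((Fin n → Bool) → Bool)}
    (hF : F.Nonempty) (hG : G.Nonempty) (xs : Fin t → Fin n → Bool) :
    ∑ bs : Fin t → Bool,
        |transcriptProb F (fun j => (xs j, bs j)) - transcriptProb G (fun j => (xs j, bs j))|
      ≤ 2 / ((2 : ℝ) ^ n) ^ t :=
  calc _ ≤ ∑ bs : Fin t → Bool,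
          (transcriptProb F (fun j => (xs j, bs j)) + transcriptProb G (fun j => (xs j, bs j))) :=
        sum_le_sum fun bs _ => (abs_sub _ _).trans_eq <| by
          rw [abs_of_nonneg (transcriptProb_nonneg ..), abs_of_nonneg (transcriptProb_nonneg ..)]
    _ = 2 / ((2 : ℝ) ^ n) ^ t := by
        rw [sum_add_distrib, sum_transcriptProb hF, sum_transcriptProb hG]
        ring

theorem sum_sum_abs_sub_transcriptProb_le {β : Type*} [Fintype β] [DecidableEq β]
    {π : (Fin n → Bool) → β} (hπ : Surjective π) :
    ∑ xs : Fin t → Fin n → Bool, ∑ bs : Fin t → Bool,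
        |transcriptProb (univ.image (· ∘ π)) (fun j => (xs j, bs j))
          - transcriptProb univ (fun j => (xs j, bs j))|
      ≤ #{xs : Fin t → Fin n → Bool | ¬Injective (π ∘ xs)} * (2 / ((2 : ℝ) ^ n) ^ t) := by
  calc _ ≤ ∑ xs : Fin t → Fin n → Bool,
          if Injective (π ∘ xs) then 0 else 2 / ((2 : ℝ) ^ n) ^ t := by
        refine sum_le_sum fun xs _ => ?_
        split_ifs with hxs
        · have hid : Injective (id ∘ xs) := hxs.of_comp
          have hU := transcriptProb_image_comp surjective_id hid
          simp only [comp_id, image_id'] at hU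
          simp [transcriptProb_image_comp hπ hxs, hU]
        · exact sum_abs_sub_transcriptProb_le (univ_nonempty.image _) univ_nonempty xs
    _ = _ := by rw [sum_ite, sum_const_zero, zero_add, sum_const, nsmul_eq_mul]

end Transcript

/-- The transcript of `t` uniformly random classical examples of a uniformly
random `k`-junta on the first `k` coordinates is `t(t-1)/2^(k+1)`-close in total
variation distance to the transcript for a uniformly random function. -/
theorem transcript_tv_distance_le {n k t : ℕ} (hkn : k ≤ n) :
    (1 / 2 : ℝ) * ∑ ω : Fin t → (Fin n → Bool) × Bool,
      |transcriptProb (Finset.univ.filter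
          (fun f : (Fin n → Bool) → Bool => ∀ x y : Fin n → Bool,
            (∀ i : Fin n, (i : ℕ) < k → x i = y i) → f x = f y)) ω
        - transcriptProb (Finset.univ : Finset ((Fin n → Bool) → Bool)) ω|
      ≤ (t : ℝ) * ((t : ℝ) - 1) / 2 ^ (k + 1) := by
  set proj : (Fin n → Bool) → Fin k → Bool := fun x => x ∘ Fin.castLE hkn
  have hjunta : univ.filter (fun f : (Fin n → Bool) → Bool => ∀ x y : Fin n → Bool,
      (∀ i : Fin n, (i : ℕ) < k → x i = y i) → f x = f y) = univ.image (· ∘ proj) := by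
    ext f
    simp only [mem_filter, mem_univ, true_and, mem_image, eq_comm (b := f)]
    simp only [← comp_castLE_eq_comp_castLE_iff hkn]
    exact factorsThrough_iff f
  have hfiber (z : Fin k → Bool) :
      #{x | proj x = z} * Fintype.card (Fin k → Bool) = Fintype.card (Fin n → Bool) :=
    card_filter_comp_eq_mul_card (Fin.castLE_injective hkn) z
  have hcollision := card_filter_not_injective_comp_mul_le (ι := Fin t) proj hfiber
  simp only [Fintype.card_fun, Fintype.card_fin, Fintype.card_bool, ← pow_mul] at hcollision
  have hbad : (#{xs : Fin t → Fin n → Bool | ¬Injective (proj ∘ xs)} : ℝ) / ((2 : ℝ) ^ n) ^ t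
      ≤ t.choose 2 / 2 ^ k := by
    rw [div_le_div_iff₀ (by positivity) (by positivity), ← pow_mul]
    exact_mod_cast hcollision
  rw [hjunta, Fintype.sum_arrow_prod]
  calc _ ≤ (1 / 2 : ℝ) * (#{xs : Fin t → Fin n → Bool | ¬Injective (proj ∘ xs)}
          * (2 / ((2 : ℝ) ^ n) ^ t)) :=
        mul_le_mul_of_nonneg_left
          (sum_sum_abs_sub_transcriptProb_le (Fin.castLE_injective hkn).surjective_comp_right)
          (by norm_num)
    _ = #{xs : Fin t → Fin n → Bool | ¬Injective (proj ∘ xs)} / ((2 : ℝ) ^ n) ^ t := by ring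
    _ ≤ t.choose 2 / 2 ^ k := hbad
    _ = (t : ℝ) * ((t : ℝ) - 1) / 2 ^ (k + 1) := by rw [Nat.cast_choose_two, pow_succ]; ring
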